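/- arXiv:2101.11839 — 2 statements merged into one kernel-verified Lean document; each statement's English description precedes it below -/
import Mathlib

section
/- Let G be a finitely generated group admitting a bounded, equivariant bicombing σ on its Cayley graph, with boundedness constants k₁ ≥ 1 and k₂ ≥ 0. Then for every a ∈ G, the centralizer Z(a) of a in G is σ-quasi-convex: there exists k ≥ 0 such that for every g ∈ Z(a) and every t, the point σ(1,g)(t) lies within distance k of Z(a) in the word metric. -/
/-- The set of lengths of words over `X ∪ X⁻¹` representing `g`. -/
def relWords {G : Type*} [Group G] (X : Set G) (g : G) : Set ℕ :=
  {n | ∃ l : List G, l.length = n ∧ (∀ x ∈ l, x ∈ X ∨ x⁻¹ ∈ X) ∧ l.prod = g}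

/-- The word norm of `g` with respect to the generating set `X`. -/
noncomputable def wordNorm {G : Type*} [Group G] (X : Set G) (g : G) : ℕ :=
  sInf (relWords X g)

/-- The word metric on `G` with respect to the generating set `X`. -/
noncomputable def wordDist {G : Type*} [Group G] (X : Set G) (g h : G) : ℕ :=
  wordNorm X (g⁻¹ * h)

/-- A bicombing of the Cayley graph of `G` with respect to `X`:  `σ x y` is a
discrete path from `x` to `y` of length `T x y` (extended constantly beyond
`T x y`), moving distance at most one at each step. -/
structure IsBicombing {G : Type*} [Group G] (X : Set G)
    (σ : G → G → ℕ → G) (T : G → G → ℕ) : Prop where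
  start : ∀ x y, σ x y 0 = x
  ends : ∀ x y t, T x y ≤ t → σ x y t = y
  step : ∀ x y t, wordDist X (σ x y t) (σ x y (t + 1)) ≤ 1

/-- Equivariance of a bicombing: `g · σ(x,y) = σ(gx, gy)`. -/
def IsEquivariantBicombing {G : Type*} [Group G] (σ : G → G → ℕ → G) : Prop :=
  ∀ g x y : G, ∀ t : ℕ, σ (g * x) (g * y) t = g * σ x y t

/-- Boundedness of a bicombing with constants `k₁, k₂`:  combing lines with
nearby endpoints fellow-travel. -/
def IsBoundedBicombing {G : Type*} [Group G] (X : Set G)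
    (σ : G → G → ℕ → G) (k₁ k₂ : ℝ) : Prop :=
  ∀ x y x' y' : G, ∀ t : ℕ,
    (wordDist X (σ x y t) (σ x' y' t) : ℝ) ≤
      k₁ * max (wordDist X x x' : ℝ) (wordDist X y y' : ℝ) + k₂

/-- A bicombing is `(lam, eps)`-quasi-geodesic if each combing line is a
`(lam, eps)`-quasi-geodesic. -/
def IsQuasiGeodesicBicombing {G : Type*} [Group G] (X : Set G)
    (σ : G → G → ℕ → G) (T : G → G → ℕ) (lam eps : ℝ) : Prop :=
  ∀ x y : G, ∀ s t : ℕ, s ≤ T x y → t ≤ T x y →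
    (1 / lam) * |(s : ℝ) - t| - eps ≤ (wordDist X (σ x y s) (σ x y t) : ℝ) ∧
    (wordDist X (σ x y s) (σ x y t) : ℝ) ≤ lam * |(s : ℝ) - t| + eps

lemma relWords_nonempty {G : Type*} [Group G] {X : Set G}
    (hXgen : Subgroup.closure X = ⊤) (g : G) : (relWords X g).Nonempty := by
  have hg : g ∈ (Subgroup.closure X).toSubmonoid := by rw [hXgen]; trivial
  rw [Subgroup.closure_toSubmonoid] at hg
  obtain ⟨l, hl, hprod⟩ := Submonoid.exists_list_of_mem_closure hg
  exact ⟨l.length, l, rfl, fun x hx => by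
    rcases hl x hx with h | h
    · exact Or.inl h
    · exact Or.inr (Set.mem_inv.mp h), hprod⟩

lemma wordNorm_spec {G : Type*} [Group G] {X : Set G}
    (hXgen : Subgroup.closure X = ⊤) (g : G) :
    ∃ l : List G, l.length = wordNorm X g ∧ (∀ x ∈ l, x ∈ X ∨ x⁻¹ ∈ X) ∧ l.prod = g :=
  Nat.sInf_mem (relWords_nonempty hXgen g)

lemma listball_finite {G : Type*} [Group G] {X : Set G} (hX : X.Finite) (N : ℕ) :
    {g : G | ∃ l : List G, l.length ≤ N ∧ (∀ x ∈ l, x ∈ X ∨ x⁻¹ ∈ X) ∧ l.prod = g}.Finite := by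
  induction N with
  | zero =>
    apply Set.Finite.subset (Set.finite_singleton (1 : G))
    rintro g ⟨l, hl, -, hprod⟩
    have hnil : l = [] := List.length_eq_zero_iff.mp (Nat.le_zero.mp hl)
    simp [hnil] at hprod
    simp [← hprod]
  | succ N ih =>
    have hS : ({x : G | x ∈ X ∨ x⁻¹ ∈ X}).Finite := by
      have he : {x : G | x ∈ X ∨ x⁻¹ ∈ X} = X ∪ X⁻¹ := by
        ext x; simp [Set.mem_inv]
      rw [he]; exact hX.union hX.inv
    apply Set.Finite.subset (ih.union (hS.mul ih))
    rintro g ⟨l, hl, hmem, hprod⟩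
    cases l with
    | nil => exact Or.inl ⟨[], by simp, by simp, hprod⟩
    | cons x l' =>
      refine Or.inr ?_
      have hx : x ∈ {x : G | x ∈ X ∨ x⁻¹ ∈ X} := hmem x (by simp)
      have hl'len : l'.length ≤ N := by simpa using Nat.succ_le_succ_iff.mp (by simpa using hl)
      have hl' : l'.prod ∈ {g : G | ∃ l : List G, l.length ≤ N ∧
          (∀ x ∈ l, x ∈ X ∨ x⁻¹ ∈ X) ∧ l.prod = g} :=
        ⟨l', hl'len, fun y hy => hmem y (by simp [hy]), rfl⟩
      rw [← hprod, List.prod_cons]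
      exact Set.mul_mem_mul hx hl'
/-- Short's lemma: if `G` admits a bounded equivariant bicombing `σ`, then the
centralizer of every element of `G` is `σ`-quasi-convex. -/
theorem centralizer_quasiconvex {G : Type*} [Group G]
    (X : Set G) (hXfin : X.Finite) (hXgen : Subgroup.closure X = ⊤)
    (σ : G → G → ℕ → G) (T : G → G → ℕ) (hbi : IsBicombing X σ T)
    (heq : IsEquivariantBicombing σ)
    (k₁ k₂ : ℝ) (hk₁ : 1 ≤ k₁) (hk₂ : 0 ≤ k₂)
    (hbd : IsBoundedBicombing X σ k₁ k₂) :
    ∀ a : G, ∃ k : ℝ, 0 ≤ k ∧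
      ∀ g ∈ Subgroup.centralizer ({a} : Set G), ∀ t : ℕ,
        ∃ h ∈ Subgroup.centralizer ({a} : Set G),
          (wordDist X (σ 1 g t) h : ℝ) ≤ k := by
  classical
  intro a
  set K : ℝ := k₁ * (wordNorm X a : ℝ) + k₂ with hKdef
  -- the ball of radius K is finite
  have hball : {c : G | (wordNorm X c : ℝ) ≤ K}.Finite := by
    apply Set.Finite.subset (listball_finite hXfin ⌈K⌉₊)
    intro c hc
    obtain ⟨l, hl1, hl2, hl3⟩ := wordNorm_spec hXgen c
    refine ⟨l, ?_, hl2, hl3⟩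
    rw [hl1]
    exact Nat.cast_le.mp (hc.trans (Nat.le_ceil K))
  -- choice of conjugating elements
  let f : G → G := fun c => if h : ∃ w : G, w⁻¹ * a * w = c then h.choose else 1
  have hfspec : ∀ c : G, ∀ h : ∃ w : G, w⁻¹ * a * w = c, (f c)⁻¹ * a * (f c) = c := by
    intro c h
    simp only [f, dif_pos h]
    exact h.choose_spec
  -- bound on the norms of chosen conjugators
  obtain ⟨k₀, hk₀⟩ : ∃ k₀ : ℝ, ∀ c ∈ {c : G | (wordNorm X c : ℝ) ≤ K},
      (wordNorm X (f c)⁻¹ : ℝ) ≤ k₀ := by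
    have hfin : ((fun c => (wordNorm X (f c)⁻¹ : ℝ)) '' {c : G | (wordNorm X c : ℝ) ≤ K}).Finite :=
      hball.image _
    obtain ⟨b, hb⟩ := hfin.bddAbove
    exact ⟨b, fun c hc => hb (Set.mem_image_of_mem _ hc)⟩
  refine ⟨max k₀ 0, le_max_right _ _, ?_⟩
  intro g hg t
  have hag : a * g = g * a := (Subgroup.mem_centralizer_iff.mp hg a (by simp))
  set p : G := σ 1 g t with hp
  -- key estimate
  have hkey : (wordNorm X (p⁻¹ * a * p) : ℝ) ≤ K := by
    have h1 := hbd 1 g a (a * g) t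
    have h2 : σ a (a * g) t = a * p := by
      have := heq a 1 g t
      rwa [mul_one] at this
    have h3 : wordDist X 1 a = wordNorm X a := by simp [wordDist]
    have h4 : wordDist X g (a * g) = wordNorm X a := by
      rw [wordDist, hag]
      simp [mul_assoc]
    rw [h2, h3, h4, max_self] at h1
    have h5 : wordDist X p (a * p) = wordNorm X (p⁻¹ * a * p) := by
      rw [wordDist, mul_assoc]
    rw [h5] at h1
    exact h1
  set c : G := p⁻¹ * a * p with hc
  have hcex : ∃ w : G, w⁻¹ * a * w = c := ⟨p, rfl⟩
  set w : G := f c with hw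
  have hwspec : w⁻¹ * a * w = p⁻¹ * a * p := hfspec c hcex
  refine ⟨p * w⁻¹, ?_, ?_⟩
  · rw [Subgroup.mem_centralizer_iff]
    intro b hb
    rw [Set.mem_singleton_iff] at hb
    rw [hb]
    calc a * (p * w⁻¹) = p * (p⁻¹ * a * p) * w⁻¹ := by group
      _ = p * (w⁻¹ * a * w) * w⁻¹ := by rw [hwspec]
      _ = p * w⁻¹ * a := by group
  · have : wordDist X p (p * w⁻¹) = wordNorm X w⁻¹ := by
      rw [wordDist]
      congr 1
      group
    rw [this]
    exact le_trans (hk₀ c hkey) (le_max_left _ _)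
end

section
/- Let G be a finitely generated group with a quasi-geodesic bicombing σ (with quasi-geodesic constants λ, ε). If H ≤ G is σ-quasi-convex with constant k, then H is finitely generated and the inclusion H ↪ G is a quasi-isometric embedding. -/
/-!
Every combing line `σ(1, h)` with `h ∈ H` is shadowed, within distance `K = ⌈k⌉`, by a sequence
of points of `H` which may be taken to start at `1` and end at `h`. Consecutive shadow points are
at distance at most `2K + 1`, so `h` is a product of `T(1, h)` elements of the finite set
`Y = H ∩ B(2K + 1)`, and the quasi-geodesic lower bound gives `T(1, h) ≤ λ (|h|_X + ε)`.
Hence `Y` generates `H` and `|h|_Y ≤ λ (|h|_X + ε)`; conversely `|h|_X ≤ (2K + 1) |h|_Y`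
because each letter of `Y` has `X`-length at most `2K + 1`.
-/

section WordNorm

variable {G : Type*} [Group G] {X : Set G}

theorem wordNorm_le_length {l : List G} (hl : ∀ x ∈ l, x ∈ X ∨ x⁻¹ ∈ X) :
    wordNorm X l.prod ≤ l.length :=
  Nat.sInf_le ⟨l, rfl, hl, rfl⟩

theorem exists_list_length_eq_wordNorm (hXgen : Subgroup.closure X = ⊤) (g : G) :
    ∃ l : List G, l.length = wordNorm X g ∧ (∀ x ∈ l, x ∈ X ∨ x⁻¹ ∈ X) ∧ l.prod = g := by
  have hg : g ∈ Submonoid.closure (X ∪ X⁻¹) := by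
    rw [← Subgroup.closure_toSubmonoid, hXgen]
    trivial
  obtain ⟨l, hl, rfl⟩ := Submonoid.exists_list_of_mem_closure hg
  exact Nat.sInf_mem (s := relWords X l.prod) ⟨l.length, l, rfl, hl, rfl⟩

@[simp]
theorem wordNorm_one : wordNorm X (1 : G) = 0 :=
  Nat.le_zero.mp (wordNorm_le_length (l := []) (by simp))

@[simp]
theorem wordDist_self (g : G) : wordDist X g g = 0 := by
  simp [wordDist]

@[simp]
theorem wordDist_one_left (g : G) : wordDist X 1 g = wordNorm X g := by
  simp [wordDist]

theorem wordNorm_mul_le (hXgen : Subgroup.closure X = ⊤) (a b : G) :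
    wordNorm X (a * b) ≤ wordNorm X a + wordNorm X b := by
  obtain ⟨l₁, h₁, m₁, rfl⟩ := exists_list_length_eq_wordNorm hXgen a
  obtain ⟨l₂, h₂, m₂, rfl⟩ := exists_list_length_eq_wordNorm hXgen b
  rw [← h₁, ← h₂, ← List.prod_append, ← List.length_append]
  exact wordNorm_le_length fun x hx => (List.mem_append.mp hx).elim (m₁ x) (m₂ x)

theorem wordNorm_inv_le (hXgen : Subgroup.closure X = ⊤) (g : G) :
    wordNorm X g⁻¹ ≤ wordNorm X g := by
  obtain ⟨l, hl, hm, rfl⟩ := exists_list_length_eq_wordNorm hXgen g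
  rw [← hl, List.prod_inv_reverse]
  refine (wordNorm_le_length fun x hx => ?_).trans (by simp)
  obtain ⟨y, hy, rfl⟩ := List.mem_map.mp (List.mem_reverse.mp hx)
  simpa [or_comm] using hm y hy

theorem wordNorm_inv (hXgen : Subgroup.closure X = ⊤) (g : G) :
    wordNorm X g⁻¹ = wordNorm X g :=
  (wordNorm_inv_le hXgen g).antisymm (by simpa using wordNorm_inv_le hXgen g⁻¹)

theorem wordDist_comm (hXgen : Subgroup.closure X = ⊤) (a b : G) :
    wordDist X a b = wordDist X b a := by
  rw [wordDist, ← wordNorm_inv hXgen, mul_inv_rev, inv_inv, wordDist]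

theorem wordDist_triangle (hXgen : Subgroup.closure X = ⊤) (a b c : G) :
    wordDist X a c ≤ wordDist X a b + wordDist X b c := by
  simpa [wordDist, mul_assoc] using wordNorm_mul_le hXgen (a⁻¹ * b) (b⁻¹ * c)

theorem wordNorm_list_prod_le_sum (hXgen : Subgroup.closure X = ⊤) (l : List G) :
    wordNorm X l.prod ≤ (l.map (wordNorm X)).sum := by
  induction l with
  | nil => simp
  | cons a l ih =>
    rw [List.prod_cons, List.map_cons, List.sum_cons]
    exact (wordNorm_mul_le hXgen a l.prod).trans (Nat.add_le_add_left ih _)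

theorem finite_setOf_wordNorm_le (hXfin : X.Finite) (hXgen : Subgroup.closure X = ⊤) (n : ℕ) :
    {g : G | wordNorm X g ≤ n}.Finite := by
  have : Finite ↥(X ∪ X⁻¹) := (hXfin.union hXfin.inv).to_subtype
  refine ((List.finite_length_le _ n).image
    fun l : List ↥(X ∪ X⁻¹) => (l.map (↑)).prod).subset fun g (hg : wordNorm X g ≤ n) => ?_
  obtain ⟨l, hl, hm, rfl⟩ := exists_list_length_eq_wordNorm hXgen g
  lift l to List ↥(X ∪ X⁻¹) using hm
  rw [← hl] at hg
  exact ⟨l, by simpa using hg, rfl⟩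

theorem wordNorm_map_le {M : Type*} [Group M] {Y : Set M} (hYgen : Subgroup.closure Y = ⊤)
    (hXgen : Subgroup.closure X = ⊤) (φ : M →* G) {R : ℕ}
    (hR : ∀ y ∈ Y, wordNorm X (φ y) ≤ R) (z : M) :
    wordNorm X (φ z) ≤ R * wordNorm Y z := by
  obtain ⟨l, hl, hm, rfl⟩ := exists_list_length_eq_wordNorm hYgen z
  have hletter : ∀ n ∈ l.map (wordNorm X ∘ φ), n ≤ R := by
    intro n hn
    obtain ⟨y, hy, rfl⟩ := List.mem_map.mp hn
    rcases hm y hy with h | h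
    · exact hR y h
    · simpa [wordNorm_inv hXgen] using hR _ h
  calc wordNorm X (φ l.prod) ≤ (l.map (wordNorm X ∘ φ)).sum := by
        simpa [map_list_prod, List.map_map] using wordNorm_list_prod_le_sum hXgen (l.map φ)
    _ ≤ (l.map (wordNorm X ∘ φ)).length • R := List.sum_le_card_nsmul _ _ hletter
    _ = R * wordNorm Y l.prod := by simp [hl, mul_comm]

end WordNorm

section Shadow

variable {G : Type*} [Group G] {X : Set G}

theorem prod_map_range_inv_mul_succ (f : ℕ → G) (n : ℕ) :
    ((List.range n).map fun i => (f i)⁻¹ * f (i + 1)).prod = (f 0)⁻¹ * f n := by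
  induction n with
  | zero => simp
  | succ n ih => simp [List.range_succ, ih, mul_assoc]

theorem exists_shadow {p : ℕ → G} {S : Set G} {K : ℕ}
    (hS : ∀ t, ∃ s ∈ S, wordDist X (p t) s ≤ K) :
    ∃ c : ℕ → G, (∀ t, c t ∈ S) ∧ (∀ t, wordDist X (p t) (c t) ≤ K) ∧
      ∀ t, p t ∈ S → c t = p t := by
  classical
  choose c hcS hcK using hS
  refine ⟨fun t => if p t ∈ S then p t else c t, fun t => ?_, fun t => ?_, fun t ht => if_pos ht⟩ <;>
    by_cases ht : p t ∈ S <;> simp [ht, hcS, hcK]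

theorem wordDist_succ_le_of_wordDist_le (hXgen : Subgroup.closure X = ⊤) {p c : ℕ → G} {K : ℕ}
    (hp : ∀ t, wordDist X (p t) (p (t + 1)) ≤ 1) (hc : ∀ t, wordDist X (p t) (c t) ≤ K)
    (t : ℕ) : wordDist X (c t) (c (t + 1)) ≤ 2 * K + 1 := by
  have h₁ := wordDist_triangle hXgen (c t) (p t) (c (t + 1))
  have h₂ := wordDist_triangle hXgen (p t) (p (t + 1)) (c (t + 1))
  have := wordDist_comm hXgen (c t) (p t)
  have := hc t
  have := hc (t + 1)
  have := hp t
  omega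

theorem exists_list_of_quasiconvex (hXgen : Subgroup.closure X = ⊤)
    {σ : G → G → ℕ → G} {T : G → G → ℕ} (hbi : IsBicombing X σ T)
    {H : Subgroup G} {K : ℕ} (hqc : ∀ h ∈ H, ∀ t, ∃ h' ∈ H, wordDist X (σ 1 h t) h' ≤ K)
    (h : H) :
    ∃ l : List H, l.length = T 1 h ∧ (∀ y ∈ l, wordNorm X (y : G) ≤ 2 * K + 1) ∧ l.prod = h := by
  obtain ⟨c, hcH, hcK, hc_eq⟩ := exists_shadow (X := X) (S := (H : Set G)) (hqc h h.2)
  have hc₀ : c 0 = 1 := by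
    rw [hc_eq 0 (by rw [hbi.start]; exact H.one_mem), hbi.start]
  have hc_end : c (T 1 h) = h := by
    rw [hc_eq _ (by rw [hbi.ends 1 h _ le_rfl]; exact h.2), hbi.ends 1 h _ le_rfl]
  let f : ℕ → H := fun t => ⟨c t, hcH t⟩
  refine ⟨(List.range (T 1 h)).map fun i => (f i)⁻¹ * f (i + 1), by simp, ?_, ?_⟩
  · simp only [List.mem_map, List.mem_range, forall_exists_index, and_imp]
    rintro _ i - rfl
    exact wordDist_succ_le_of_wordDist_le hXgen (hbi.step 1 h) hcK i
  · rw [prod_map_range_inv_mul_succ]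
    ext
    simp [f, hc₀, hc_end]

end Shadow

theorem IsQuasiGeodesicBicombing.length_le {G : Type*} [Group G] {X : Set G}
    {σ : G → G → ℕ → G} {T : G → G → ℕ} {lam eps : ℝ}
    (hqg : IsQuasiGeodesicBicombing X σ T lam eps) (hbi : IsBicombing X σ T) (hlam : 0 < lam)
    (x y : G) : (T x y : ℝ) ≤ lam * (wordDist X x y + eps) := by
  have h := (hqg x y 0 (T x y) (Nat.zero_le _) le_rfl).1
  rw [hbi.start, hbi.ends x y _ le_rfl] at h
  rw [← div_le_iff₀' hlam]
  simpa [abs_sub_comm, div_eq_inv_mul] using h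

theorem quasiIsometry_bounds_of_le {a b lam R eps : ℝ} (hlam : 0 < lam) (heps : 0 ≤ eps)
    (hb : 0 ≤ b) (hup : a ≤ R * b) (hlo : b ≤ lam * (a + eps)) :
    1 / max lam R * b - eps ≤ a ∧ a ≤ max lam R * b + eps := by
  constructor
  · have h₁ : 1 / max lam R * b ≤ 1 / lam * b := by
      gcongr
      exact le_max_left _ _
    have h₂ : 1 / lam * b ≤ a + eps := by
      rwa [one_div_mul_eq_div, div_le_iff₀' hlam]
    linarith
  · nlinarith [mul_le_mul_of_nonneg_right (le_max_right lam R) hb]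

theorem quasiconvex_qi_embedded_general {G : Type*} [Group G]
    (X : Set G) (hXfin : X.Finite) (hXgen : Subgroup.closure X = ⊤)
    (σ : G → G → ℕ → G) (T : G → G → ℕ) (hbi : IsBicombing X σ T)
    (lam eps : ℝ) (hlam : 1 ≤ lam) (heps : 0 ≤ eps)
    (hqg : IsQuasiGeodesicBicombing X σ T lam eps)
    (H : Subgroup G) (k : ℝ)
    (hqc : ∀ h ∈ H, ∀ t : ℕ, ∃ h' ∈ H, (wordDist X (σ 1 h t) h' : ℝ) ≤ k) :
    ∃ Y : Set H, Y.Finite ∧ Subgroup.closure Y = ⊤ ∧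
      ∃ lam' C : ℝ, 1 ≤ lam' ∧ 0 ≤ C ∧ ∀ h h' : H,
        (1 / lam') * (wordDist Y h h' : ℝ) - C ≤ (wordDist X (h : G) (h' : G) : ℝ) ∧
        (wordDist X (h : G) (h' : G) : ℝ) ≤ lam' * (wordDist Y h h' : ℝ) + C := by
  have hlam₀ : 0 < lam := zero_lt_one.trans_le hlam
  set R := 2 * ⌈k⌉₊ + 1
  set Y : Set H := {y | wordNorm X (y : G) ≤ R}
  have hqcK : ∀ h ∈ H, ∀ t, ∃ h' ∈ H, wordDist X (σ 1 h t) h' ≤ ⌈k⌉₊ := fun h hh t =>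
    let ⟨h', hh', hd⟩ := hqc h hh t
    ⟨h', hh', by exact_mod_cast hd.trans (Nat.le_ceil k)⟩
  have hpath := exists_list_of_quasiconvex hXgen hbi hqcK
  have hYgen : Subgroup.closure Y = ⊤ := by
    refine eq_top_iff.mpr fun z _ => ?_
    obtain ⟨l, -, hlY, hl⟩ := hpath z
    exact hl ▸ list_prod_mem fun y hy => Subgroup.subset_closure (hlY y hy)
  refine ⟨Y, (finite_setOf_wordNorm_le hXfin hXgen R).preimage Subtype.val_injective.injOn,
    hYgen, max lam R, eps, le_max_of_le_left hlam, heps, fun h h' => ?_⟩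
  obtain ⟨l, hlT, hlY, hl⟩ := hpath (h⁻¹ * h')
  have hY : wordNorm Y (h⁻¹ * h') ≤ T 1 ↑(h⁻¹ * h') :=
    hlT ▸ hl ▸ wordNorm_le_length fun y hy => Or.inl (hlY y hy)
  refine quasiIsometry_bounds_of_le hlam₀ heps (Nat.cast_nonneg _) ?_ ?_
  · exact_mod_cast wordNorm_map_le hYgen hXgen H.subtype (fun y hy => hy) (h⁻¹ * h')
  · have hT := hqg.length_le hbi hlam₀ 1 ((h⁻¹ * h' : H) : G)
    rw [wordDist_one_left] at hT
    exact (Nat.cast_le.mpr hY).trans hT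

/-- Alonso–Bridson Lemma 7.2: if `σ` is a quasi-geodesic bicombing of `G` and
`H ≤ G` is `σ`-quasi-convex with constant `k`, then `H` is finitely generated
and the inclusion `H ↪ G` is a quasi-isometric embedding. -/
theorem quasiconvex_qi_embedded {G : Type*} [Group G]
    (X : Set G) (hXfin : X.Finite) (hXgen : Subgroup.closure X = ⊤)
    (σ : G → G → ℕ → G) (T : G → G → ℕ) (hbi : IsBicombing X σ T)
    (lam eps : ℝ) (hlam : 1 ≤ lam) (heps : 0 ≤ eps)
    (hqg : IsQuasiGeodesicBicombing X σ T lam eps)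
    (H : Subgroup G) (k : ℝ) (hk : 0 ≤ k)
    (hqc : ∀ h ∈ H, ∀ t : ℕ, ∃ h' ∈ H, (wordDist X (σ 1 h t) h' : ℝ) ≤ k) :
    ∃ Y : Set H, Y.Finite ∧ Subgroup.closure Y = ⊤ ∧
      ∃ lam' C : ℝ, 1 ≤ lam' ∧ 0 ≤ C ∧ ∀ h h' : H,
        (1 / lam') * (wordDist Y h h' : ℝ) - C ≤ (wordDist X (h : G) (h' : G) : ℝ) ∧
        (wordDist X (h : G) (h' : G) : ℝ) ≤ lam' * (wordDist Y h h' : ℝ) + C :=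
  quasiconvex_qi_embedded_general X hXfin hXgen σ T hbi lam eps hlam heps hqg H k hqc
end
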